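/- The bilinear form Γ is weakly coercive: there exists a constant C > 0 (depending only on K, ω₀ and r) such that for every l : ℝ × {−ω₀, ω₀} → ℝ, 2π-periodic and smooth in θ, odd (l(−θ, −ω) = −l(θ, ω)), with ∫₀^{2π} l(θ, ω) dθ = 0 for each ω, there exists a 2π-periodic continuous odd h : ℝ × {−ω₀, ω₀} → ℝ with (1/2)·Σ_{ω}∫₀^{2π} h(θ, ω)² dθ ≤ C²·‖l‖²_{μ,−1,q} and Γ(h, l) = ‖l‖²_{μ,−1,q}, where ‖l‖²_{μ,−1,q} = (1/2)·Σ_{ω}∫₀^{2π} 𝓛(θ, ω)²/q(θ, ω) dθ. -/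

import Mathlib

/-!
For each disorder value take `h = q 𝓛 / κ`. Since `𝓛' = l` and `𝓛` is periodic,
`∫ h l / q = κ⁻¹ ∫ 𝓛 𝓛' = 0`, so the first term of `Γ(h, l)` vanishes and the second one is
exactly `∫ 𝓛² / q`. The `L²` bound holds with `C² = sup q³ / κ²`, which is finite because `q`
is continuous, periodic and positive while `κ(±ω₀) ≠ 0`. Oddness of `h` comes from the
symmetries `q(-θ, -ω) = q(θ, ω)` and `κ(-ω) = -κ(ω)` of the stationary profile.
-/

noncomputable section

open MeasureTheory

/-- `G u ω x = x·cos u + 2ωu`. -/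
def G (u ω x : ℝ) : ℝ := x * Real.cos u + 2 * ω * u

/-- The unnormalized stationary profile `S(θ, ω, x)`. -/
def S (θ ω x : ℝ) : ℝ :=
  Real.exp (G θ ω x) *
    ((1 - Real.exp (4 * Real.pi * ω)) * (∫ u in (0:ℝ)..θ, Real.exp (-(G u ω x))) +
      Real.exp (4 * Real.pi * ω) * (∫ u in (0:ℝ)..(2 * Real.pi), Real.exp (-(G u ω x))))

/-- The normalization constant `Z(ω, x)`. -/
def Z (ω x : ℝ) : ℝ := ∫ θ in (0:ℝ)..(2 * Real.pi), S θ ω x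

/-- `Ψ_μ` for the binary disorder law `μ = (1/2)(δ_{-ω₀} + δ_{ω₀})`. -/
def psiMu (ω₀ x : ℝ) : ℝ :=
  (1 / 2) * ((∫ θ in (0:ℝ)..(2 * Real.pi), Real.cos θ * S θ (-ω₀) x) / Z (-ω₀) x +
    (∫ θ in (0:ℝ)..(2 * Real.pi), Real.cos θ * S θ ω₀ x) / Z ω₀ x)

/-- The stationary density `q(θ, ω) = S(θ, ω, 2Kr)/Z(ω, 2Kr)`. -/
def q (K r θ ω : ℝ) : ℝ := S θ ω (2 * K * r) / Z ω (2 * K * r)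

/-- `κ(ω) = (1 − exp(4πω))/(2 Z(ω, 2Kr))`. -/
def kap (K r ω : ℝ) : ℝ := (1 - Real.exp (4 * Real.pi * ω)) / (2 * Z ω (2 * K * r))

/-- The averaged convolution `⟨J∗h⟩_μ(θ)` for binary disorder. -/
def Jconv (K ω₀ : ℝ) (h : ℝ → ℝ → ℝ) (θ : ℝ) : ℝ :=
  -(K / 2) * ((∫ φ in (0:ℝ)..(2 * Real.pi), Real.sin φ * h (θ - φ) (-ω₀)) +
    (∫ φ in (0:ℝ)..(2 * Real.pi), Real.sin φ * h (θ - φ) ω₀))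

/-- The linearized evolution operator `L` around the stationary density `q`. -/
def Lop (K ω₀ r : ℝ) (h : ℝ → ℝ → ℝ) (θ ω : ℝ) : ℝ :=
  (1 / 2) * deriv (deriv (fun u => h u ω)) θ -
    deriv (fun u => h u ω * (Jconv K ω₀ (q K r) u + ω) + q K r u ω * Jconv K ω₀ h u) θ

/-- The `2π`-periodic primitive of a zero-mean function `a`, normalized so that its
integral against `1/k` over a period vanishes. -/
def prim (k a : ℝ → ℝ) (θ : ℝ) : ℝ :=
  (∫ u in (0:ℝ)..θ, a u) -
    (∫ s in (0:ℝ)..(2 * Real.pi), (∫ u in (0:ℝ)..s, a u) / k s) /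
      (∫ s in (0:ℝ)..(2 * Real.pi), 1 / k s)

/-- The bilinear form appearing in the decomposition of the Dirichlet form. -/
def Gam (K r ω₀ : ℝ) (h l : ℝ → ℝ → ℝ) : ℝ :=
  -(1 / 2) * ((1 / 2) *
      ((∫ θ in (0:ℝ)..(2 * Real.pi), h θ (-ω₀) * l θ (-ω₀) / q K r θ (-ω₀)) +
        (∫ θ in (0:ℝ)..(2 * Real.pi), h θ ω₀ * l θ ω₀ / q K r θ ω₀))) +
    (1 / 2) *
      ((∫ θ in (0:ℝ)..(2 * Real.pi),
          kap K r (-ω₀) * h θ (-ω₀) *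
            prim (fun u => q K r u (-ω₀)) (fun u => l u (-ω₀)) θ / (q K r θ (-ω₀)) ^ 2) +
        (∫ θ in (0:ℝ)..(2 * Real.pi),
          kap K r ω₀ * h θ ω₀ *
            prim (fun u => q K r u ω₀) (fun u => l u ω₀) θ / (q K r θ ω₀) ^ 2))

/-- The squared weighted negative Sobolev norm of a zero-mean function. -/
def normMuSq (K r ω₀ : ℝ) (l : ℝ → ℝ → ℝ) : ℝ :=
  (1 / 2) *
    ((∫ θ in (0:ℝ)..(2 * Real.pi),
        (prim (fun u => q K r u (-ω₀)) (fun u => l u (-ω₀)) θ) ^ 2 / q K r θ (-ω₀)) +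
      (∫ θ in (0:ℝ)..(2 * Real.pi),
        (prim (fun u => q K r u ω₀) (fun u => l u ω₀) θ) ^ 2 / q K r θ ω₀))

open Real Function intervalIntegral

lemma Function.Periodic.intervalIntegral_comp_neg {f : ℝ → ℝ} {T : ℝ} (hf : Periodic f T) :
    ∫ s in (0:ℝ)..T, f (-s) = ∫ s in (0:ℝ)..T, f s := by
  rw [integral_comp_neg f, neg_zero]
  simpa using hf.intervalIntegral_add_eq (-T) 0

lemma integral_sq_mul_div_le {P w : ℝ → ℝ} {a b c B : ℝ} (hab : a ≤ b) (hP : Continuous P)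
    (hw : Continuous w) (hpos : ∀ θ, 0 < w θ) (hc : c ≠ 0) (hB : ∀ θ, w θ ^ 3 ≤ B * c ^ 2) :
    ∫ θ in a..b, (P θ * w θ / c) ^ 2 ≤ B * ∫ θ in a..b, P θ ^ 2 / w θ := by
  have hw0 : ∀ θ, w θ ≠ 0 := fun θ => (hpos θ).ne'
  have hlhs : Continuous fun θ => (P θ * w θ / c) ^ 2 := by fun_prop
  have hrhs : Continuous fun θ => B * (P θ ^ 2 / w θ) := by fun_prop (disch := exact hw0)
  rw [← intervalIntegral.integral_const_mul]
  refine intervalIntegral.integral_mono_on hab (hlhs.intervalIntegrable _ _)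
    (hrhs.intervalIntegrable _ _) fun θ _ => ?_
  have hwθ := hpos θ
  calc (P θ * w θ / c) ^ 2 = P θ ^ 2 * w θ ^ 3 / c ^ 2 / w θ := by field_simp
    _ ≤ P θ ^ 2 * (B * c ^ 2) / c ^ 2 / w θ := by gcongr; exact hB θ
    _ = B * (P θ ^ 2 / w θ) := by field_simp

section Primitive

variable {k a : ℝ → ℝ}

lemma periodic_primitive {T : ℝ} (ha : Periodic a T) (hac : Continuous a)
    (hmean : ∫ u in (0:ℝ)..T, a u = 0) : Periodic (fun t => ∫ u in (0:ℝ)..t, a u) T := fun t => by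
  simp only [ha.intervalIntegral_add_eq_add 0 t fun _ _ => hac.intervalIntegrable _ _, zero_add,
    hmean, add_zero]

lemma hasDerivAt_prim (hac : Continuous a) (t : ℝ) : HasDerivAt (prim k a) (a t) t :=
  ((hac.integral_hasStrictDerivAt 0 t).hasDerivAt).sub_const _

lemma continuous_prim (hac : Continuous a) : Continuous (prim k a) :=
  continuous_iff_continuousAt.mpr fun t => (hasDerivAt_prim hac t).continuousAt

lemma prim_periodic (ha : Periodic a (2 * π)) (hac : Continuous a)
    (hmean : ∫ u in (0:ℝ)..2 * π, a u = 0) : Periodic (prim k a) (2 * π) := fun θ => by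
  simp only [prim, periodic_primitive ha hac hmean θ]

lemma integral_prim_mul_eq_zero (hac : Continuous a) (hmean : ∫ u in (0:ℝ)..2 * π, a u = 0) :
    ∫ θ in (0:ℝ)..2 * π, prim k a θ * a θ = 0 := by
  have hderiv : ∀ t ∈ Set.uIcc 0 (2 * π), HasDerivAt (fun y => prim k a y * prim k a y / 2)
      (prim k a t * a t) t := fun t _ =>
    (((hasDerivAt_prim hac t).mul (hasDerivAt_prim hac t)).div_const 2).congr_deriv (by ring)
  rw [integral_eq_sub_of_hasDerivAt hderiv
    (((continuous_prim hac).mul hac).intervalIntegrable _ _)]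
  simp [prim, hmean]

lemma prim_comp_neg (hk : Periodic k (2 * π)) (ha : Periodic a (2 * π)) (hac : Continuous a)
    (hmean : ∫ u in (0:ℝ)..2 * π, a u = 0) (θ : ℝ) :
    prim (fun u => k (-u)) (fun u => -a (-u)) (-θ) = prim k a θ := by
  have hP : ∀ t, ∫ u in (0:ℝ)..t, -a (-u) = ∫ u in (0:ℝ)..-t, a u := fun t => by
    rw [intervalIntegral.integral_neg, integral_comp_neg a, neg_zero, integral_symm, neg_neg]
  have hPk : Periodic (fun s => (∫ u in (0:ℝ)..s, a u) / k s) (2 * π) := fun s => by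
    simp only [periodic_primitive ha hac hmean s, hk s]
  have hk' : Periodic (fun s => 1 / k s) (2 * π) := fun s => by simp only [hk s]
  simp only [prim, hP, neg_neg]
  rw [hPk.intervalIntegral_comp_neg, hk'.intervalIntegral_comp_neg]

end Primitive

section Profile

lemma continuous_exp_neg_G (ω x : ℝ) : Continuous fun u => exp (-G u ω x) := by
  unfold G; fun_prop

lemma G_add_two_pi (u ω x : ℝ) : G (u + 2 * π) ω x = G u ω x + 4 * π * ω := by
  unfold G; rw [cos_add_two_pi]; ring

lemma G_neg_neg (u ω x : ℝ) : G (-u) (-ω) x = G u ω x := by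
  unfold G; rw [cos_neg]; ring

lemma integral_exp_neg_G_add_two_pi (θ ω x : ℝ) :
    ∫ u in (0:ℝ)..θ + 2 * π, exp (-G u ω x) =
      (∫ u in (0:ℝ)..2 * π, exp (-G u ω x)) +
        exp (-(4 * π * ω)) * ∫ u in (0:ℝ)..θ, exp (-G u ω x) := by
  have hint := (continuous_exp_neg_G ω x).intervalIntegrable (μ := volume)
  rw [← integral_add_adjacent_intervals (hint 0 (2 * π)) (hint _ (θ + 2 * π)),
    ← intervalIntegral.integral_const_mul]
  congr 1
  simpa [G_add_two_pi, ← exp_add, neg_add, add_comm] using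
    (integral_comp_add_right (fun u => exp (-G u ω x)) (2 * π) (a := 0) (b := θ)).symm

lemma S_periodic (ω x : ℝ) : Periodic (fun θ => S θ ω x) (2 * π) := by
  intro θ
  simp only [S]
  rw [integral_exp_neg_G_add_two_pi, G_add_two_pi, exp_add, exp_neg (4 * π * ω)]
  field_simp
  ring

lemma integral_exp_neg_G_neg_neg (θ ω x : ℝ) :
    ∫ u in (0:ℝ)..-θ, exp (-G u (-ω) x) = -∫ u in (0:ℝ)..θ, exp (-G u ω x) := by
  have h : ∀ u, G u (-ω) x = G (-u) ω x := fun u => by simpa using G_neg_neg (-u) ω x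
  simp_rw [h]
  rw [integral_comp_neg (fun u => exp (-G u ω x)), integral_symm, neg_neg, neg_zero]

lemma integral_exp_neg_G_neg (ω x : ℝ) :
    ∫ u in (0:ℝ)..2 * π, exp (-G u (-ω) x) =
      exp (4 * π * ω) * ∫ u in (0:ℝ)..2 * π, exp (-G u ω x) := by
  have hshift := integral_exp_neg_G_add_two_pi (-(2 * π)) ω x
  rw [neg_add_cancel, integral_same] at hshift
  have hneg := integral_exp_neg_G_neg_neg (-(2 * π)) ω x
  rw [neg_neg] at hneg
  have he : exp (4 * π * ω) * exp (-(4 * π * ω)) = 1 := by rw [← exp_add]; simp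
  rw [hneg]
  linear_combination exp (4 * π * ω) * hshift + (∫ u in (0:ℝ)..-(2 * π), exp (-G u ω x)) * he

lemma S_neg_neg (θ ω x : ℝ) : S (-θ) (-ω) x = exp (-(4 * π * ω)) * S θ ω x := by
  simp only [S, G_neg_neg]
  rw [integral_exp_neg_G_neg_neg, integral_exp_neg_G_neg, mul_neg (4 * π)]
  simp only [exp_neg (4 * π * ω)]
  field_simp
  ring

lemma Z_neg (ω x : ℝ) : Z (-ω) x = exp (-(4 * π * ω)) * Z ω x := by
  have h : ∀ θ, S θ (-ω) x = exp (-(4 * π * ω)) * S (-θ) ω x := fun θ => by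
    simpa using S_neg_neg (-θ) ω x
  simp only [Z, h, intervalIntegral.integral_const_mul,
    (S_periodic ω x).intervalIntegral_comp_neg]

lemma continuous_S (ω x : ℝ) : Continuous fun θ => S θ ω x := by
  have hprim := continuous_primitive (fun a b => (continuous_exp_neg_G ω x).intervalIntegrable
    (μ := volume) a b) 0
  unfold S G at *
  fun_prop

lemma S_pos (θ ω x : ℝ) : 0 < S θ ω x := by
  obtain ⟨θ', ⟨h0, h2π⟩, hθ⟩ := (S_periodic ω x).exists_mem_Ico₀ two_pi_pos θ
  rw [hθ, S]
  have hint := (continuous_exp_neg_G ω x).intervalIntegrable (μ := volume)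
  -- on a period, `S = e^G (∫₀^θ e^{-G} + e^{4πω} ∫_θ^{2π} e^{-G})` and the last integral is > 0
  rw [← integral_add_adjacent_intervals (hint 0 θ') (hint θ' (2 * π))]
  have hI : 0 ≤ ∫ u in (0:ℝ)..θ', exp (-G u ω x) :=
    intervalIntegral.integral_nonneg h0 fun u _ => (exp_pos _).le
  have hJ : 0 < ∫ u in θ'..2 * π, exp (-G u ω x) :=
    intervalIntegral_pos_of_pos_on (hint _ _) (fun u _ => exp_pos _) h2π
  have he := exp_pos (4 * π * ω)
  refine mul_pos (exp_pos _) ?_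
  nlinarith

lemma Z_pos (ω x : ℝ) : 0 < Z ω x :=
  intervalIntegral_pos_of_pos_on ((continuous_S ω x).intervalIntegrable _ _)
    (fun θ _ => S_pos θ ω x) two_pi_pos

end Profile

section Density

variable (K r : ℝ)

lemma q_pos (θ ω : ℝ) : 0 < q K r θ ω := div_pos (S_pos θ ω _) (Z_pos ω _)

lemma continuous_q (ω : ℝ) : Continuous fun θ => q K r θ ω := (continuous_S ω _).div_const _

lemma q_periodic (ω : ℝ) : Periodic (fun θ => q K r θ ω) (2 * π) := fun θ => by
  simp only [q, S_periodic ω _ θ]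

lemma q_neg_neg (θ ω : ℝ) : q K r (-θ) (-ω) = q K r θ ω := by
  rw [q, q, S_neg_neg, Z_neg, mul_div_mul_left _ _ (exp_ne_zero _)]

lemma kap_neg (ω : ℝ) : kap K r (-ω) = -kap K r ω := by
  have hZ := (Z_pos ω (2 * K * r)).ne'
  rw [kap, kap, Z_neg, mul_neg (4 * π), exp_neg]
  field_simp
  ring

lemma kap_ne_zero {ω : ℝ} (hω : ω ≠ 0) : kap K r ω ≠ 0 := by
  refine div_ne_zero (sub_ne_zero.mpr fun h => ?_) (mul_ne_zero two_ne_zero (Z_pos ω _).ne')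
  have := exp_eq_one_iff (4 * π * ω) |>.mp h.symm
  simp [pi_ne_zero, hω] at this

lemma exists_q_cube_le_mul_kap_sq {ω₀ : ℝ} (hω₀ : ω₀ ≠ 0) :
    ∃ B > 0, ∀ ω ∈ ({-ω₀, ω₀} : Set ℝ), ∀ θ, q K r θ ω ^ 3 ≤ B * kap K r ω ^ 2 := by
  obtain ⟨M, hM⟩ := ((q_periodic K r ω₀).compact_of_continuous two_pi_pos.ne'
    (continuous_q K r ω₀)).isBounded.bddAbove
  have hMq : ∀ θ, q K r θ ω₀ ≤ M := fun θ => hM ⟨θ, rfl⟩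
  have hM0 : 0 < M := (q_pos K r 0 ω₀).trans_le (hMq 0)
  have hκ : kap K r ω₀ ≠ 0 := kap_ne_zero K r hω₀
  have hbound : ∀ θ, q K r θ ω₀ ^ 3 ≤ M ^ 3 / kap K r ω₀ ^ 2 * kap K r ω₀ ^ 2 := fun θ => by
    rw [div_mul_cancel₀ _ (pow_ne_zero 2 hκ)]
    exact pow_le_pow_left₀ (q_pos K r θ ω₀).le (hMq θ) 3
  refine ⟨M ^ 3 / kap K r ω₀ ^ 2, by positivity, ?_⟩
  rintro ω (rfl | rfl) θ
  · have hθ := q_neg_neg K r (-θ) ω₀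
    rw [neg_neg] at hθ
    rw [hθ, kap_neg, neg_sq]
    exact hbound (-θ)
  · exact hbound θ

end Density

section Witness

variable (K r : ℝ) (l : ℝ → ℝ → ℝ)

def coerciveWitness (θ ω : ℝ) : ℝ :=
  prim (fun u => q K r u ω) (fun u => l u ω) θ * q K r θ ω / kap K r ω

variable {K r l} {ω : ℝ}

lemma continuous_coerciveWitness (hcont : Continuous fun θ => l θ ω) :
    Continuous fun θ => coerciveWitness K r l θ ω :=
  ((continuous_prim hcont).mul (continuous_q K r ω)).div_const _

lemma coerciveWitness_periodic (hper : Periodic (fun θ => l θ ω) (2 * π))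
    (hcont : Continuous fun θ => l θ ω) (hmean : ∫ θ in (0:ℝ)..2 * π, l θ ω = 0) :
    Periodic (fun θ => coerciveWitness K r l θ ω) (2 * π) := fun θ => by
  simp only [coerciveWitness, prim_periodic hper hcont hmean θ, q_periodic K r ω θ]

lemma coerciveWitness_neg_neg (hodd : ∀ θ, l (-θ) (-ω) = -l θ ω)
    (hper : Periodic (fun θ => l θ ω) (2 * π)) (hcont : Continuous fun θ => l θ ω)
    (hmean : ∫ θ in (0:ℝ)..2 * π, l θ ω = 0) (θ : ℝ) :
    coerciveWitness K r l (-θ) (-ω) = -coerciveWitness K r l θ ω := by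
  have hq : (fun u => q K r u (-ω)) = fun u => q K r (-u) ω :=
    funext fun u => by simpa using q_neg_neg K r (-u) ω
  have hl : (fun u => l u (-ω)) = fun u => -l (-u) ω := funext fun u => by simpa using hodd (-u)
  rw [coerciveWitness, hq, hl, prim_comp_neg (q_periodic K r ω) hper hcont hmean, q_neg_neg,
    kap_neg, div_neg, coerciveWitness]

lemma integral_coerciveWitness_mul_div_q (hcont : Continuous fun θ => l θ ω)
    (hmean : ∫ θ in (0:ℝ)..2 * π, l θ ω = 0) :
    ∫ θ in (0:ℝ)..2 * π, coerciveWitness K r l θ ω * l θ ω / q K r θ ω = 0 := by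
  have h : ∀ θ, coerciveWitness K r l θ ω * l θ ω / q K r θ ω =
      prim (fun u => q K r u ω) (fun u => l u ω) θ * l θ ω / kap K r ω := fun θ => by
    have := (q_pos K r θ ω).ne'
    rw [coerciveWitness]
    field_simp
  simp only [h, intervalIntegral.integral_div, integral_prim_mul_eq_zero hcont hmean, zero_div]

lemma integral_kap_mul_coerciveWitness (hκ : kap K r ω ≠ 0) :
    ∫ θ in (0:ℝ)..2 * π,
        kap K r ω * coerciveWitness K r l θ ω * prim (fun u => q K r u ω) (fun u => l u ω) θ /
          q K r θ ω ^ 2 =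
      ∫ θ in (0:ℝ)..2 * π, prim (fun u => q K r u ω) (fun u => l u ω) θ ^ 2 / q K r θ ω := by
  congr 1 with θ
  have := (q_pos K r θ ω).ne'
  rw [coerciveWitness]
  field_simp

lemma integral_coerciveWitness_sq_le {B : ℝ} (hcont : Continuous fun θ => l θ ω)
    (hκ : kap K r ω ≠ 0) (hB : ∀ θ, q K r θ ω ^ 3 ≤ B * kap K r ω ^ 2) :
    ∫ θ in (0:ℝ)..2 * π, coerciveWitness K r l θ ω ^ 2 ≤
      B * ∫ θ in (0:ℝ)..2 * π, prim (fun u => q K r u ω) (fun u => l u ω) θ ^ 2 / q K r θ ω :=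
  integral_sq_mul_div_le two_pi_pos.le (continuous_prim hcont) (continuous_q K r ω)
    (q_pos K r · ω) hκ hB

end Witness

lemma Gam_coerciveWitness {K r ω₀ : ℝ} {l : ℝ → ℝ → ℝ} (hω₀ : ω₀ ≠ 0)
    (hcont : ∀ ω ∈ ({-ω₀, ω₀} : Set ℝ), Continuous fun θ => l θ ω)
    (hmean : ∀ ω ∈ ({-ω₀, ω₀} : Set ℝ), ∫ θ in (0:ℝ)..2 * π, l θ ω = 0) :
    Gam K r ω₀ (coerciveWitness K r l) l = normMuSq K r ω₀ l := by
  have hm₁ : -ω₀ ∈ ({-ω₀, ω₀} : Set ℝ) := by simp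
  have hm₂ : ω₀ ∈ ({-ω₀, ω₀} : Set ℝ) := by simp
  rw [Gam, normMuSq, integral_coerciveWitness_mul_div_q (hcont _ hm₁) (hmean _ hm₁),
    integral_coerciveWitness_mul_div_q (hcont _ hm₂) (hmean _ hm₂),
    integral_kap_mul_coerciveWitness (kap_ne_zero K r (neg_ne_zero.mpr hω₀)),
    integral_kap_mul_coerciveWitness (kap_ne_zero K r hω₀)]
  ring

theorem stmt10_general (K ω₀ r : ℝ) (hω₀ : 0 < ω₀) :
    ∃ C : ℝ, 0 < C ∧
      ∀ l : ℝ → ℝ → ℝ,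
        (∀ ω ∈ ({-ω₀, ω₀} : Set ℝ), Function.Periodic (fun θ => l θ ω) (2 * Real.pi)) →
        (∀ ω ∈ ({-ω₀, ω₀} : Set ℝ), ContDiff ℝ (⊤ : ℕ∞) (fun θ => l θ ω)) →
        (∀ θ : ℝ, ∀ ω ∈ ({-ω₀, ω₀} : Set ℝ), l (-θ) (-ω) = -l θ ω) →
        (∀ ω ∈ ({-ω₀, ω₀} : Set ℝ), (∫ θ in (0:ℝ)..(2 * Real.pi), l θ ω) = 0) →
        ∃ h : ℝ → ℝ → ℝ,
          (∀ ω ∈ ({-ω₀, ω₀} : Set ℝ),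
            Function.Periodic (fun θ => h θ ω) (2 * Real.pi) ∧
              Continuous (fun θ => h θ ω)) ∧
          (∀ θ : ℝ, ∀ ω ∈ ({-ω₀, ω₀} : Set ℝ), h (-θ) (-ω) = -h θ ω) ∧
          (1 / 2) * ((∫ θ in (0:ℝ)..(2 * Real.pi), (h θ (-ω₀)) ^ 2) +
              (∫ θ in (0:ℝ)..(2 * Real.pi), (h θ ω₀) ^ 2)) ≤ C ^ 2 * normMuSq K r ω₀ l ∧
          Gam K r ω₀ h l = normMuSq K r ω₀ l := by
  obtain ⟨B, hB, hq_cube⟩ := exists_q_cube_le_mul_kap_sq K r hω₀.ne'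
  refine ⟨√B, sqrt_pos.mpr hB, fun l hper hsmooth hodd hmean => ?_⟩
  have hcont : ∀ ω ∈ ({-ω₀, ω₀} : Set ℝ), Continuous fun θ => l θ ω :=
    fun ω hω => (hsmooth ω hω).continuous
  have hκ : ∀ ω ∈ ({-ω₀, ω₀} : Set ℝ), kap K r ω ≠ 0 := by
    rintro ω (rfl | rfl)
    exacts [kap_ne_zero K r (neg_ne_zero.mpr hω₀.ne'), kap_ne_zero K r hω₀.ne']
  have hsq (ω) (hω : ω ∈ ({-ω₀, ω₀} : Set ℝ)) :=
    integral_coerciveWitness_sq_le (hcont ω hω) (hκ ω hω) (hq_cube ω hω)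
  refine ⟨coerciveWitness K r l, fun ω hω => ⟨coerciveWitness_periodic (hper ω hω) (hcont ω hω)
    (hmean ω hω), continuous_coerciveWitness (hcont ω hω)⟩, fun θ ω hω =>
    coerciveWitness_neg_neg (hodd · ω hω) (hper ω hω) (hcont ω hω) (hmean ω hω) θ, ?_,
    Gam_coerciveWitness hω₀.ne' hcont hmean⟩
  rw [sq_sqrt hB.le, normMuSq]
  linarith [hsq (-ω₀) (by simp), hsq ω₀ (by simp)]

/-- Weak coercivity of the bilinear form: some uniform constant works for every
admissible odd zero-mean `l`. -/
theorem stmt10 (K ω₀ r : ℝ) (hK : 0 < K) (hω₀ : 0 < ω₀) (hr : 0 < r)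
    (hfix : r = psiMu ω₀ (2 * K * r)) :
    ∃ C : ℝ, 0 < C ∧
      ∀ l : ℝ → ℝ → ℝ,
        (∀ ω ∈ ({-ω₀, ω₀} : Set ℝ), Function.Periodic (fun θ => l θ ω) (2 * Real.pi)) →
        (∀ ω ∈ ({-ω₀, ω₀} : Set ℝ), ContDiff ℝ (⊤ : ℕ∞) (fun θ => l θ ω)) →
        (∀ θ : ℝ, ∀ ω ∈ ({-ω₀, ω₀} : Set ℝ), l (-θ) (-ω) = -l θ ω) →
        (∀ ω ∈ ({-ω₀, ω₀} : Set ℝ), (∫ θ in (0:ℝ)..(2 * Real.pi), l θ ω) = 0) →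
        ∃ h : ℝ → ℝ → ℝ,
          (∀ ω ∈ ({-ω₀, ω₀} : Set ℝ),
            Function.Periodic (fun θ => h θ ω) (2 * Real.pi) ∧
              Continuous (fun θ => h θ ω)) ∧
          (∀ θ : ℝ, ∀ ω ∈ ({-ω₀, ω₀} : Set ℝ), h (-θ) (-ω) = -h θ ω) ∧
          (1 / 2) * ((∫ θ in (0:ℝ)..(2 * Real.pi), (h θ (-ω₀)) ^ 2) +
              (∫ θ in (0:ℝ)..(2 * Real.pi), (h θ ω₀) ^ 2)) ≤ C ^ 2 * normMuSq K r ω₀ l ∧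
          Gam K r ω₀ h l = normMuSq K r ω₀ l :=
  stmt10_general K ω₀ r hω₀
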